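/- arXiv:math/0506335 — 2 statements merged into one kernel-verified Lean document; each statement's English description precedes it below -/
import Mathlib

section
/- (Vanishing theorem for factorial Schur functions) Let λ and ρ be partitions with at most p parts and set a_ρ = (a_{ρ_1+p}, a_{ρ_2+p−1}, ..., a_{ρ_p+1}). Then s_λ(a_ρ | a) = 0 whenever λ is not contained in ρ, and s_λ(a_λ | a) = ∏_{(i,j)∈λ} (a_{λ_i+p−i+1} − a_{p−λ'_j+j}), where λ' is the conjugate partition. -/
open Finset
open scoped Classical

noncomputable section

variable {R : Type*} [CommRing R]

/-- shifted sequence: `(τ^s a)_n = a_{n+s}` -/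
def shiftSeq (a : ℤ → R) (s : ℤ) : ℤ → R := fun n => a (n + s)

/-- factorial complete homogeneous function `h_k(x|a)`
    (`= Σ_{1≤i_1≤...≤i_k≤p} ∏_r (x_{i_r} - a_{i_r + r - 1})`, `0` for `k < 0`) -/
def fh (p : ℕ) (x : Fin p → R) (a : ℤ → R) (k : ℤ) : R :=
  if 0 ≤ k then
    ∑ f ∈ Finset.univ.filter (fun f : Fin k.toNat → Fin p => Monotone f),
      ∏ r : Fin k.toNat, (x (f r) - a (((f r : ℕ) : ℤ) + ((r : ℕ) : ℤ) + 1))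
  else 0

/-- factorial elementary function `e_k(x|a)`
    (`= Σ_{1≤i_1<...<i_k≤p} ∏_r (x_{i_r} - a_{i_r - r + 1})`, `0` for `k < 0`;
    it vanishes automatically for `k > p`) -/
def fe (p : ℕ) (x : Fin p → R) (a : ℤ → R) (k : ℤ) : R :=
  if 0 ≤ k then
    ∑ f ∈ Finset.univ.filter (fun f : Fin k.toNat → Fin p => StrictMono f),
      ∏ r : Fin k.toNat, (x (f r) - a (((f r : ℕ) : ℤ) - ((r : ℕ) : ℤ) + 1))
  else 0

/-- generalized factorial power `(y|a)^k = (y - a_1)⋯(y - a_k)` -/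
def gfp (y : R) (a : ℤ → R) (k : ℕ) : R :=
  ∏ i ∈ Finset.range k, (y - a ((i : ℤ) + 1))

/-- the factorial Schur polynomial `s_λ(x|a)`, defined through the factorial
    Jacobi-Trudi determinant `det( h_{λ_i - i + j}(x | τ^{1-j} a) )_{1≤i,j≤p}` -/
def fschur (p : ℕ) (lam : Fin p → ℕ) (x : Fin p → R) (a : ℤ → R) : R :=
  Matrix.det (Matrix.of fun i j : Fin p =>
    fh p x (shiftSeq a (-((j : ℕ) : ℤ))) (((lam i : ℕ) : ℤ) - ((i : ℕ) : ℤ) + ((j : ℕ) : ℤ)))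

/-!
Expanding each factorial power `(x_k|a)^m` in the factorial complete functions
`h_r(x | τ^{-j} a)` factors the alternant `det[(x_k|a)^{λ_i+p-1-i}]` as the Jacobi–Trudi matrix
of `s_λ(x|a)` times a matrix independent of `λ`; taking `λ = 0` identifies the determinant of the
latter with `∏_{i<k} (x_i - x_k)`. At `x = a_ρ` the alternant has a zero block unless `λ ⊆ ρ`,
and at `x = a_λ` it is triangular, with diagonal entries that split, by the complementarity of
`{λ_k + p - k}` and `{p - λ'_j + j + 1}`, into the Vandermonde factor times the claimed product.
Cancelling the Vandermonde factor is legitimate for generic `a`, i.e. in `ℤ[a_n : n ∈ ℤ]`, and the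
general case follows by specialization.
-/

omit [CommRing R] in
lemma shiftSeq_shiftSeq (a : ℤ → R) (s t : ℤ) :
    shiftSeq (shiftSeq a s) t = shiftSeq a (t + s) := by
  funext n
  simp [shiftSeq, add_assoc]

section FactorialH

variable {p : ℕ} {x : Fin p → R} {a : ℤ → R}

lemma fh_of_neg {k : ℤ} (hk : k < 0) : fh p x a k = 0 := if_neg (by omega)

lemma fh_natCast (n : ℕ) :
    fh p x a n = ∑ f ∈ univ.filter (fun f : Fin n → Fin p => Monotone f),
      ∏ r : Fin n, (x (f r) - a ((f r : ℕ) + (r : ℕ) + 1)) := by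
  rw [fh, if_pos (Int.natCast_nonneg n), Int.toNat_natCast]

lemma fh_zero : fh p x a 0 = 1 := by
  rw [← Nat.cast_zero, fh_natCast, filter_true_of_mem fun f _ => Subsingleton.monotone f]
  simp

lemma monotone_cons_zero_iff {n : ℕ} (g : Fin n → Fin (p + 1)) :
    Monotone (Fin.cons 0 g : Fin (n + 1) → Fin (p + 1)) ↔ Monotone g := by
  refine ⟨fun h => h.comp Fin.strictMono_succ.monotone, fun h u v huv => ?_⟩
  induction u using Fin.cases with
  | zero => exact Fin.zero_le _
  | succ u =>
    induction v using Fin.cases with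
    | zero => exact absurd (Fin.le_zero_iff.mp huv) (Fin.succ_ne_zero u)
    | succ v => exact h (Fin.succ_le_succ_iff.mp huv)

lemma sum_monotone_of_apply_zero_eq_zero {M : Type*} [AddCommMonoid M] {n : ℕ}
    (F : (Fin (n + 1) → Fin (p + 1)) → M) :
    ∑ f ∈ univ.filter (fun f : Fin (n + 1) → Fin (p + 1) => Monotone f ∧ f 0 = 0), F f
      = ∑ g ∈ univ.filter (fun g : Fin n → Fin (p + 1) => Monotone g), F (Fin.cons 0 g) := by
  symm
  refine sum_nbij' (fun g => (Fin.cons 0 g : Fin (n + 1) → Fin (p + 1))) Fin.tail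
    (fun g hg => ?_) (fun f hf => ?_) (fun g _ => Fin.tail_cons _ _) (fun f hf => ?_)
    (fun _ _ => rfl)
  · simp only [mem_filter, mem_univ, true_and] at hg ⊢
    exact ⟨(monotone_cons_zero_iff g).mpr hg, rfl⟩
  · simp only [mem_filter, mem_univ, true_and] at hf ⊢
    exact hf.1.comp Fin.strictMono_succ.monotone
  · simp only [mem_filter, mem_univ, true_and] at hf
    rw [← hf.2, Fin.cons_self_tail]

lemma sum_monotone_of_apply_zero_ne_zero {M : Type*} [AddCommMonoid M] {n : ℕ}
    (F : (Fin (n + 1) → Fin (p + 1)) → M) :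
    ∑ f ∈ univ.filter (fun f : Fin (n + 1) → Fin (p + 1) => Monotone f ∧ f 0 ≠ 0), F f
      = ∑ g ∈ univ.filter (fun g : Fin (n + 1) → Fin p => Monotone g), F (Fin.succ ∘ g) := by
  have hne {f : Fin (n + 1) → Fin (p + 1)} (hf : Monotone f ∧ f 0 ≠ 0) (r) : f r ≠ 0 :=
    fun h => hf.2 (Fin.le_zero_iff.mp (h ▸ hf.1 (Fin.zero_le r)))
  symm
  refine sum_bij' (fun g _ => Fin.succ ∘ g)
    (fun f hf r => (f r).pred (hne (mem_filter.mp hf).2 r))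
    (fun g hg => ?_) (fun f hf => ?_) (fun g _ => ?_) (fun f hf => ?_) (fun _ _ => rfl)
  · simp only [mem_filter, mem_univ, true_and] at hg ⊢
    exact ⟨Fin.strictMono_succ.monotone.comp hg, Fin.succ_ne_zero _⟩
  · simp only [mem_filter, mem_univ, true_and] at hf ⊢
    exact fun u v huv => Fin.pred_le_pred_iff.mpr (hf.1 huv)
  · funext r
    simp
  · funext r
    simp

lemma fh_cons (y : R) (k : ℤ) :
    fh (p + 1) (Fin.cons y x) a k
      = fh p x (shiftSeq a 1) k + (y - a 1) * fh (p + 1) (Fin.cons y x) (shiftSeq a 1) (k - 1) := by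
  rcases lt_trichotomy k 0 with hk | rfl | hk
  · rw [fh_of_neg hk, fh_of_neg hk, fh_of_neg (by omega), mul_zero, add_zero]
  · rw [fh_zero, fh_zero, fh_of_neg (by omega), mul_zero, add_zero]
  obtain ⟨n, rfl⟩ : ∃ n : ℕ, k = n + 1 := ⟨(k - 1).toNat, by omega⟩
  rw [add_sub_cancel_right, ← Nat.cast_succ, fh_natCast, fh_natCast, fh_natCast,
    ← sum_filter_add_sum_filter_not _ (fun f => f 0 = 0), filter_filter, filter_filter,
    sum_monotone_of_apply_zero_eq_zero, sum_monotone_of_apply_zero_ne_zero, add_comm, mul_sum]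
  congr 1 <;> refine sum_congr rfl fun g _ => ?_
  · refine prod_congr rfl fun r _ => ?_
    simp only [Function.comp_apply, Fin.cons_succ, Fin.val_succ, shiftSeq]
    push_cast
    ring_nf
  · rw [Fin.prod_univ_succ]
    simp [shiftSeq, add_assoc]

lemma fh_one_natCast (x : Fin 1 → R) (m : ℕ) :
    fh 1 x a m = ∏ i ∈ range m, (x 0 - a ((i : ℤ) + 1)) := by
  rw [fh_natCast, filter_true_of_mem fun f _ => Subsingleton.monotone' f,
    univ_unique, sum_singleton, ← Fin.prod_univ_eq_prod_range]
  simp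

lemma fh_cons_sub_fh_cons (w : Fin p → R) (y z : R) (b : ℤ → R) (m : ℤ) :
    fh (p + 1) (Fin.cons z w) b m - fh (p + 1) (Fin.cons y w) b m
      = (z - y) * fh (p + 2) (Fin.cons y (Fin.cons z w)) b (m - 1) := by
  rcases lt_trichotomy m 0 with hm | rfl | hm
  · rw [fh_of_neg hm, fh_of_neg hm, fh_of_neg (by omega), mul_zero, sub_self]
  · rw [fh_zero, fh_zero, fh_of_neg (by omega), mul_zero, sub_self]
  rw [fh_cons (x := w) (a := b) z m, fh_cons (x := w) (a := b) y m,
    fh_cons (x := Fin.cons z w) (a := b) y (m - 1)]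
  linear_combination (y - b 1) * fh_cons_sub_fh_cons w y z (shiftSeq b 1) (m - 1)
termination_by m.toNat

lemma fh_cons_cons_comm (w : Fin p → R) (y z : R) (b : ℤ → R) (m : ℤ) :
    fh (p + 2) (Fin.cons y (Fin.cons z w)) b m = fh (p + 2) (Fin.cons z (Fin.cons y w)) b m := by
  rcases lt_trichotomy m 0 with hm | rfl | hm
  · rw [fh_of_neg hm, fh_of_neg hm]
  · rw [fh_zero, fh_zero]
  rw [fh_cons (x := Fin.cons z w) (a := b) y m, fh_cons (x := Fin.cons y w) (a := b) z m,
    fh_cons (x := w) (a := shiftSeq b 1) z m, fh_cons (x := w) (a := shiftSeq b 1) y m,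
    fh_cons (x := Fin.cons z w) (a := shiftSeq b 1) y (m - 1),
    fh_cons (x := Fin.cons y w) (a := shiftSeq b 1) z (m - 1)]
  linear_combination (y + z - b 1 - shiftSeq b 1 1)
      * fh_cons_sub_fh_cons w y z (shiftSeq (shiftSeq b 1) 1) (m - 1)
    + (z - b 1) * (z - shiftSeq b 1 1)
      * fh_cons_cons_comm w y z (shiftSeq (shiftSeq b 1) 1) (m - 1 - 1)
termination_by m.toNat

end FactorialH

lemma sum_range_mul_sub_mul_eq {n : ℕ} (e c H : ℕ → R) (he₀ : e 0 = 0) (he : e (n + 1) = 0) :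
    ∑ t ∈ range n, e (t + 1) * (H (t + 1) - c t * H t)
      = ∑ t ∈ range (n + 1), (e t - c t * e (t + 1)) * H t := by
  simp only [sub_mul, mul_sub, sum_sub_distrib]
  rw [sum_range_succ' (fun t => e t * H t), sum_range_succ (fun t => c t * e (t + 1) * H t),
    he₀, he]
  simp only [zero_mul, mul_zero, add_zero]
  congr 1
  exact sum_congr rfl fun t _ => by ring

/-- The coefficients `c_j(z)` of the expansion `gfp_eq_sum_interpCoeff_mul_fh`. -/
def interpCoeff : (q : ℕ) → (Fin q → R) → (ℤ → R) → ℕ → R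
  | 0, _, _, j => if j = 1 then 1 else 0
  | q + 1, z, a, j =>
      interpCoeff q (Fin.tail z) a (j - 1) - (z 0 - a (1 - j)) * interpCoeff q (Fin.tail z) a j

lemma interpCoeff_zero_right : ∀ (q : ℕ) (z : Fin q → R) (a : ℤ → R), interpCoeff q z a 0 = 0
  | 0, _, _ => by simp [interpCoeff]
  | q + 1, _, _ => by simp [interpCoeff, interpCoeff_zero_right q]

lemma interpCoeff_eq_zero_of_lt :
    ∀ (q : ℕ) (z : Fin q → R) (a : ℤ → R) {j : ℕ}, q + 1 < j → interpCoeff q z a j = 0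
  | 0, _, _, j, h => if_neg (by omega)
  | q + 1, _, _, j, h => by
    rw [interpCoeff, interpCoeff_eq_zero_of_lt q _ _ (by omega),
      interpCoeff_eq_zero_of_lt q _ _ (by omega), mul_zero, sub_zero]

lemma interpCoeff_succ_right (q : ℕ) (z : Fin (q + 1) → R) (a : ℤ → R) (t : ℕ) :
    interpCoeff (q + 1) z a (t + 1)
      = interpCoeff q (Fin.tail z) a t - (z 0 - a (-t)) * interpCoeff q (Fin.tail z) a (t + 1) := by
  rw [interpCoeff, Nat.add_sub_cancel]
  push_cast
  ring_nf

lemma fh_tail_eq_sub {q : ℕ} (x : Fin (q + 1) → R) (a : ℤ → R) (t : ℕ) (d : ℤ) :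
    fh q (Fin.tail x) (shiftSeq a (-t)) d
      = fh (q + 1) x (shiftSeq a (-(t + 1 : ℕ))) d
        - (x 0 - a (-t)) * fh (q + 1) x (shiftSeq a (-t)) (d - 1) := by
  have h := fh_cons (x := Fin.tail x) (a := shiftSeq a (-(t + 1 : ℕ))) (x 0) d
  rw [Fin.cons_self_tail, shiftSeq_shiftSeq] at h
  have hs : (1 : ℤ) + -(t + 1 : ℕ) = -t := by push_cast; ring
  rw [h, hs]
  simp only [shiftSeq]
  push_cast
  ring_nf

lemma sum_interpCoeff_mul_fh_tail (q : ℕ) (x : Fin (q + 2) → R) (j : Fin (q + 1)) (a : ℤ → R)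
    (m : ℤ) :
    ∑ t ∈ range (q + 1), interpCoeff q (Fin.tail x ∘ j.succAbove) a (t + 1)
        * fh (q + 1) (Fin.tail x) (shiftSeq a (-t)) (m - q + t)
      = ∑ t ∈ range (q + 2), interpCoeff (q + 1) (x ∘ j.succ.succAbove) a (t + 1)
        * fh (q + 2) x (shiftSeq a (-t)) (m - (q + 1 : ℕ) + t) := by
  set e := interpCoeff q (Fin.tail x ∘ j.succAbove) a
  set H : ℕ → R := fun t => fh (q + 2) x (shiftSeq a (-t)) (m - (q + 1 : ℕ) + t)
  have hcoeff (t : ℕ) : interpCoeff (q + 1) (x ∘ j.succ.succAbove) a (t + 1)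
      = e t - (x 0 - a (-t)) * e (t + 1) := by
    have htail : Fin.tail (x ∘ j.succ.succAbove) = Fin.tail x ∘ j.succAbove := by
      funext r
      simp [Fin.tail, Fin.succ_succAbove_succ]
    rw [interpCoeff_succ_right, htail, Function.comp_apply, Fin.succ_succAbove_zero]
  have hfh (t : ℕ) : fh (q + 1) (Fin.tail x) (shiftSeq a (-t)) (m - q + t)
      = H (t + 1) - (x 0 - a (-t)) * H t := by
    rw [fh_tail_eq_sub]
    simp only [H]
    push_cast
    ring_nf
  simp only [hcoeff, hfh]
  exact sum_range_mul_sub_mul_eq e _ H (interpCoeff_zero_right _ _ _)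
    (interpCoeff_eq_zero_of_lt _ _ _ (by omega))

theorem gfp_eq_sum_interpCoeff_mul_fh (q : ℕ) (x : Fin (q + 1) → R) (k : Fin (q + 1))
    (a : ℤ → R) (m : ℕ) :
    gfp (x k) a m = ∑ t ∈ range (q + 1), interpCoeff q (x ∘ k.succAbove) a (t + 1)
        * fh (q + 1) x (shiftSeq a (-t)) (m - q + t) := by
  induction q with
  | zero =>
    rw [Fin.fin_one_eq_zero k, sum_range_one]
    simp [interpCoeff, shiftSeq, fh_one_natCast, gfp]
  | succ q ih =>
    have hsucc (x : Fin (q + 2) → R) (j : Fin (q + 1)) :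
        gfp (x j.succ) a m = ∑ t ∈ range (q + 2), interpCoeff (q + 1) (x ∘ j.succ.succAbove) a
          (t + 1) * fh (q + 2) x (shiftSeq a (-t)) (m - (q + 1 : ℕ) + t) := by
      rw [← sum_interpCoeff_mul_fh_tail, ← ih (Fin.tail x) j]
      rfl
    cases k using Fin.cases with
    | succ j => exact hsucc x j
    | zero =>
      -- `fh` is symmetric in its first two variables, so `k = 0` reduces to `k = 1`
      set w := Fin.tail (Fin.tail x)
      have hx : x = Fin.cons (x 0) (Fin.cons (x 1) w) := by
        conv_lhs => rw [← Fin.cons_self_tail x, ← Fin.cons_self_tail (Fin.tail x)]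
        rfl
      set x' : Fin (q + 2) → R := Fin.cons (x 1) (Fin.cons (x 0) w)
      have hcomp : x' ∘ (0 : Fin (q + 1)).succ.succAbove = x ∘ (0 : Fin (q + 2)).succAbove := by
        funext r
        cases r using Fin.cases <;> simp [x', w, Fin.tail]
      rw [show x 0 = x' (0 : Fin (q + 1)).succ from rfl, hsucc, hcomp]
      refine sum_congr rfl fun t _ => ?_
      rw [fh_cons_cons_comm, ← hx]

lemma gfp_eq_eval (y : R) (a : ℤ → R) (m : ℕ) :
    gfp y a m = (∏ t ∈ range m, (Polynomial.X - Polynomial.C (a ((t : ℤ) + 1)))).eval y := by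
  simp [gfp, Polynomial.eval_prod]

lemma prod_Ioi_sub_rev {n : ℕ} (x : Fin n → R) :
    ∏ i : Fin n, ∏ j ∈ Ioi i, (x j.rev - x i.rev) = ∏ i : Fin n, ∏ k ∈ Ioi i, (x i - x k) := by
  rw [prod_sigma', prod_sigma']
  refine prod_nbij' (fun z : (_ : Fin n) × Fin n => ⟨z.2.rev, z.1.rev⟩)
    (fun z : (_ : Fin n) × Fin n => ⟨z.2.rev, z.1.rev⟩) ?_ ?_
    (fun z _ => by simp) (fun z _ => by simp) (fun z _ => rfl) <;>
  · intro z hz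
    simpa using hz

theorem det_gfp_eq_prod_sub (q : ℕ) (x : Fin (q + 1) → R) (a : ℤ → R) :
    (Matrix.of fun i k : Fin (q + 1) => gfp (x k) a (q - i)).det
      = ∏ i, ∏ k ∈ Ioi i, (x i - x k) := by
  cases subsingleton_or_nontrivial R
  · exact Subsingleton.elim _ _
  set P : ℕ → Polynomial R :=
    fun d => ∏ t ∈ range d, (Polynomial.X - Polynomial.C (a ((t : ℤ) + 1)))
  have hP := Matrix.det_eval_matrixOfPolynomials_eq_det_vandermonde (fun i => x i.rev)
    (fun j => P j) (fun j => by simp [P]) (fun j => Polynomial.monic_prod_of_monic _ _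
      fun t _ => Polynomial.monic_X_sub_C _)
  rw [Matrix.det_vandermonde, prod_Ioi_sub_rev] at hP
  rw [hP, ← Matrix.det_transpose, ← Matrix.det_submatrix_equiv_self Fin.revPerm]
  congr 1
  ext i k
  simp only [Matrix.submatrix_apply, Matrix.transpose_apply, Matrix.of_apply, Fin.revPerm_apply,
    gfp_eq_eval, P, Fin.val_rev]
  congr 3
  omega

lemma fschur_zero_left (p : ℕ) (x : Fin p → R) (a : ℤ → R) : fschur p (fun _ => 0) x a = 1 := by
  rw [fschur, Matrix.det_of_isUpperTriangular]
  · refine prod_eq_one fun i _ => ?_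
    simp [fh_zero]
  · intro i j (hji : j < i)
    have : (j : ℕ) < i := hji
    exact fh_of_neg (by omega)

lemma det_gfp_eq_fschur_mul (q : ℕ) (lam : Fin (q + 1) → ℕ) (x : Fin (q + 1) → R) (a : ℤ → R) :
    (Matrix.of fun i k : Fin (q + 1) => gfp (x k) a (lam i + (q - i))).det
      = fschur (q + 1) lam x a
        * (Matrix.of fun j k : Fin (q + 1) => interpCoeff q (x ∘ k.succAbove) a (j + 1)).det := by
  rw [fschur, ← Matrix.det_mul]
  congr 1
  ext i k
  rw [Matrix.mul_apply, Matrix.of_apply, gfp_eq_sum_interpCoeff_mul_fh,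
    ← Fin.sum_univ_eq_sum_range]
  refine sum_congr rfl fun j _ => ?_
  rw [mul_comm]
  have hi : (i : ℕ) ≤ q := Nat.lt_succ_iff.mp i.isLt
  congr 2
  push_cast [hi]
  ring

theorem fschur_mul_prod_sub (p : ℕ) (lam : Fin p → ℕ) (x : Fin p → R) (a : ℤ → R) :
    fschur p lam x a * ∏ i, ∏ k ∈ Ioi i, (x i - x k)
      = (Matrix.of fun i k : Fin p => gfp (x k) a (lam i + (p - 1 - i))).det := by
  cases p with
  | zero => simp [fschur]
  | succ q =>
    have hcoeff := det_gfp_eq_fschur_mul q (fun _ => 0) x a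
    simp only [zero_add, fschur_zero_left, one_mul, det_gfp_eq_prod_sub] at hcoeff
    rw [hcoeff, Nat.add_sub_cancel, det_gfp_eq_fschur_mul]

section ConjugatePartition

variable {p : ℕ} {lam : Fin p → ℕ}

/-- The part `λ'_{j+1}` of the conjugate partition. -/
def conjPart (lam : Fin p → ℕ) (j : ℕ) : ℕ := (univ.filter fun r : Fin p => j + 1 ≤ lam r).card

lemma conjPart_le (j : ℕ) : conjPart lam j ≤ p :=
  (card_filter_le _ _).trans (card_fin p).le

lemma conjPart_antitone : Antitone (conjPart lam) :=
  fun _ _ hj => card_le_card (monotone_filter_right _ fun _ _ => by omega)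

lemma lt_conjPart_iff (hlam : Antitone lam) (r : Fin p) (j : ℕ) :
    (r : ℕ) < conjPart lam j ↔ j < lam r := by
  constructor
  · intro hr
    by_contra! hle
    have hsub : (univ.filter fun s : Fin p => j + 1 ≤ lam s) ⊆ Iio r := fun s hs => by
      simp only [mem_filter, mem_univ, true_and, mem_Iio] at hs ⊢
      by_contra! hrs
      have := hlam hrs
      omega
    have := card_le_card hsub
    rw [Fin.card_Iio] at this
    exact absurd hr this.not_gt
  · intro hj
    have hsub : Iic r ⊆ univ.filter fun s : Fin p => j + 1 ≤ lam s := fun s hs => by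
      simp only [mem_filter, mem_univ, true_and, mem_Iic] at hs ⊢
      exact hj.trans_le (hlam hs)
    have := card_le_card hsub
    rw [Fin.card_Iic] at this
    exact this

lemma strictAnti_shiftedPart (hlam : Antitone lam) :
    StrictAnti fun k : Fin p => (lam k : ℤ) + p - k := fun k k' hkk' => by
  have := hlam hkk'.le
  have : (k : ℕ) < k' := hkk'
  simp only
  omega

lemma strictMono_shiftedConjPart : StrictMono fun j : ℕ => (p : ℤ) - conjPart lam j + (j + 1) :=
  fun j j' hjj' => by
    have := conjPart_antitone (lam := lam) hjj'.le
    simp only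
    omega

lemma shiftedPart_ne_shiftedConjPart (hlam : Antitone lam) (k : Fin p) (j : ℕ) :
    (lam k : ℤ) + p - k ≠ p - conjPart lam j + (j + 1) := by
  have := lt_conjPart_iff hlam k j
  rcases lt_or_ge j (lam k) with hj | hj
  · have := this.mpr hj
    omega
  · have : ¬ (k : ℕ) < conjPart lam j := fun h => by have := this.mp h; omega
    omega

lemma disjoint_image_shiftedPart_image_shiftedConjPart (hlam : Antitone lam) (K : Finset (Fin p))
    (J : Finset ℕ) :
    Disjoint (K.image fun k => (lam k : ℤ) + p - k)
      (J.image fun j => (p : ℤ) - conjPart lam j + (j + 1)) := by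
  simp only [disjoint_left, mem_image, not_exists, not_and]
  rintro _ ⟨k, -, rfl⟩ j -
  exact (shiftedPart_ne_shiftedConjPart hlam k j).symm

/-- Macdonald, *Symmetric functions and Hall polynomials*, I.(1.7), cut off at row `i`. -/
lemma Icc_eq_image_shiftedPart_union_image_shiftedConjPart (hlam : Antitone lam) (i : Fin p) :
    Icc (1 : ℤ) (lam i + p - 1 - i)
      = (Ioi i).image (fun k => (lam k : ℤ) + p - k)
        ∪ (range (lam i)).image (fun j => (p : ℤ) - conjPart lam j + (j + 1)) := by
  have hi := i.isLt
  refine (eq_of_subset_of_card_le (fun s hs => ?_) ?_).symm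
  · simp only [mem_union, mem_image, mem_Ioi, mem_range] at hs
    rw [mem_Icc]
    rcases hs with ⟨k, hik, rfl⟩ | ⟨j, hj, rfl⟩
    · have := hlam hik.le
      have : (i : ℕ) < k := hik
      omega
    · have := (lt_conjPart_iff hlam i j).mpr hj
      have := conjPart_le (lam := lam) j
      omega
  · rw [card_union_of_disjoint (disjoint_image_shiftedPart_image_shiftedConjPart hlam _ _),
      card_image_of_injective _ (strictAnti_shiftedPart hlam).injective,
      card_image_of_injective _ strictMono_shiftedConjPart.injective, Int.card_Icc, Fin.card_Ioi,
      card_range]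
    omega

lemma prod_Icc_eq_prod_shiftedPart_mul_prod_shiftedConjPart {M : Type*} [CommMonoid M]
    (hlam : Antitone lam) (i : Fin p) (f : ℤ → M) :
    ∏ s ∈ Icc (1 : ℤ) (lam i + p - 1 - i), f s
      = (∏ k ∈ Ioi i, f ((lam k : ℤ) + p - k))
        * ∏ j ∈ range (lam i), f ((p : ℤ) - conjPart lam j + (j + 1)) := by
  rw [Icc_eq_image_shiftedPart_union_image_shiftedConjPart hlam,
    prod_union (disjoint_image_shiftedPart_image_shiftedConjPart hlam _ _),
    prod_image (strictAnti_shiftedPart hlam).injective.injOn,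
    prod_image strictMono_shiftedConjPart.injective.injOn]

end ConjugatePartition

lemma gfp_eq_prod_Icc (y : R) (a : ℤ → R) (m : ℕ) :
    gfp y a m = ∏ s ∈ Icc (1 : ℤ) m, (y - a s) := by
  refine prod_nbij' (fun i => (i : ℤ) + 1) (fun s => (s - 1).toNat) ?_ ?_ ?_ ?_
    (fun _ _ => rfl) <;> intros <;> simp_all <;> omega

lemma gfp_self_eq_zero (a : ℤ → R) {r : ℤ} {m : ℕ} (h₁ : 1 ≤ r) (h₂ : r ≤ m) :
    gfp (a r) a m = 0 := by
  rw [gfp_eq_prod_Icc]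
  exact prod_eq_zero (mem_Icc.mpr ⟨h₁, h₂⟩) (sub_self _)

lemma prod_Ioi_sub_ne_zero [IsDomain R] {n : ℕ} {x : Fin n → R} (hx : Function.Injective x) :
    ∏ i, ∏ k ∈ Ioi i, (x i - x k) ≠ 0 :=
  prod_ne_zero_iff.mpr fun _ _ => prod_ne_zero_iff.mpr fun _ hk =>
    sub_ne_zero.mpr (hx.ne (mem_Ioi.mp hk).ne)

lemma Matrix.det_eq_zero_of_zero_block {n : ℕ} (M : Matrix (Fin n) (Fin n) R) (i₀ : Fin n)
    (h : ∀ i k, i ≤ i₀ → i₀ ≤ k → M i k = 0) : M.det = 0 := by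
  rw [Matrix.det_apply]
  refine sum_eq_zero fun σ _ => ?_
  obtain ⟨k, hk, hσk⟩ : ∃ k, i₀ ≤ k ∧ σ k ≤ i₀ := by
    by_contra! hc
    have := card_le_card_of_injOn σ (fun k hk => mem_Ioi.mpr (hc k (mem_Ici.mp hk)))
      σ.injective.injOn
    rw [Fin.card_Ici, Fin.card_Ioi] at this
    omega
  rw [prod_eq_zero (f := fun i => M (σ i) i) (mem_univ k) (h _ _ hσk hk), smul_zero]

section Domain

variable [IsDomain R] {p : ℕ} {a : ℤ → R} {lam : Fin p → ℕ}

theorem fschur_eq_zero_of_not_le (ha : Function.Injective a) {rho : Fin p → ℕ}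
    (hlam : Antitone lam) (hrho : Antitone rho) (h : ¬ lam ≤ rho) :
    fschur p lam (fun j => a ((rho j : ℤ) + p - j)) a = 0 := by
  obtain ⟨i₀, hi₀⟩ : ∃ i₀, rho i₀ < lam i₀ := by simpa [Pi.le_def] using h
  have hx : Function.Injective fun j : Fin p => a ((rho j : ℤ) + p - j) :=
    ha.comp (strictAnti_shiftedPart hrho).injective
  have hG := fschur_mul_prod_sub p lam (fun j => a ((rho j : ℤ) + p - j)) a
  rw [Matrix.det_eq_zero_of_zero_block _ i₀ fun i k hi hk => ?_] at hG
  · exact (mul_eq_zero.mp hG).resolve_right (prod_Ioi_sub_ne_zero hx)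
  have := hlam hi
  have := hrho hk
  have : (i : ℕ) ≤ i₀ := hi
  have : (i₀ : ℕ) ≤ k := hk
  have := k.isLt
  exact gfp_self_eq_zero a (by omega) (by omega)

theorem fschur_shiftedPart_eq_prod (ha : Function.Injective a) (hlam : Antitone lam) :
    fschur p lam (fun j => a ((lam j : ℤ) + p - j)) a
      = ∏ i, ∏ j ∈ range (lam i), (a ((lam i : ℤ) + p - i) - a (p - conjPart lam j + (j + 1))) := by
  have hx : Function.Injective fun j : Fin p => a ((lam j : ℤ) + p - j) :=
    ha.comp (strictAnti_shiftedPart hlam).injective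
  refine mul_right_cancel₀ (prod_Ioi_sub_ne_zero hx) ?_
  rw [fschur_mul_prod_sub, Matrix.det_of_isLowerTriangular, ← prod_mul_distrib]
  · refine prod_congr rfl fun i _ => ?_
    have hi := i.isLt
    rw [Matrix.of_apply, gfp_eq_prod_Icc, mul_comm]
    rw [show (((lam i + (p - 1 - i) : ℕ)) : ℤ) = lam i + p - 1 - i by omega,
      prod_Icc_eq_prod_shiftedPart_mul_prod_shiftedConjPart hlam]
  · intro i k (hik : i < k)
    have := hlam hik.le
    have : (i : ℕ) < k := hik
    have := k.isLt
    exact gfp_self_eq_zero a (by omega) (by omega)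

end Domain

lemma map_fh {S : Type*} [CommRing S] (φ : R →+* S) (p : ℕ) (x : Fin p → R) (a : ℤ → R) (k : ℤ) :
    φ (fh p x a k) = fh p (φ ∘ x) (φ ∘ a) k := by
  unfold fh
  split_ifs <;> simp

lemma map_fschur {S : Type*} [CommRing S] (φ : R →+* S) (p : ℕ) (lam : Fin p → ℕ) (x : Fin p → R)
    (a : ℤ → R) : φ (fschur p lam x a) = fschur p lam (φ ∘ x) (φ ∘ a) := by
  rw [fschur, fschur, RingHom.map_det]
  congr 1
  ext i j
  exact map_fh φ _ _ _ _

lemma fschur_eq_aeval (p : ℕ) (lam : Fin p → ℕ) (f : Fin p → ℤ) (a : ℤ → R) :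
    fschur p lam (fun j => a (f j)) a
      = MvPolynomial.aeval a
          (fschur p lam (fun j => (MvPolynomial.X (f j) : MvPolynomial ℤ ℤ)) MvPolynomial.X) := by
  rw [← AlgHom.coe_toRingHom, map_fschur]
  congr <;> funext <;> simp

/-- (Vanishing theorem.)  With `a_ρ = (a_{ρ_1+p},...,a_{ρ_p+1})`:
    `s_λ(a_ρ|a) = 0` unless `λ ⊆ ρ`, and
    `s_λ(a_λ|a) = ∏_{(i,j)∈λ} (a_{λ_i+p-i+1} - a_{p-λ'_j+j})`. -/
theorem factorial_schur_vanishing (p : ℕ) (a : ℤ → R)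
    (lam rho : Fin p → ℕ) (hlam : Antitone lam) (hrho : Antitone rho) :
    (¬ lam ≤ rho →
      fschur p lam (fun j : Fin p => a ((rho j : ℤ) + (p : ℤ) - (j : ℕ))) a = 0) ∧
    fschur p lam (fun j : Fin p => a ((lam j : ℤ) + (p : ℤ) - (j : ℕ))) a =
      ∏ i : Fin p, ∏ j ∈ Finset.range (lam i),
        (a ((lam i : ℤ) + (p : ℤ) - (i : ℕ)) -
          a ((p : ℤ) - ((Finset.univ.filter (fun r : Fin p => j + 1 ≤ lam r)).card : ℤ)
            + ((j : ℤ) + 1))) := by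
  have hX : Function.Injective (MvPolynomial.X : ℤ → MvPolynomial ℤ ℤ) := MvPolynomial.X_injective
  refine ⟨fun h => ?_, ?_⟩
  · rw [fschur_eq_aeval, fschur_eq_zero_of_not_le hX hlam hrho h, map_zero]
  · rw [fschur_eq_aeval, fschur_shiftedPart_eq_prod hX hlam]
    simp [conjPart]
end
end

section
/- (Factorial Jacobi–Trudi identity, dual version) For a partition λ whose parts are at most m−p and whose conjugate λ' has at most m−p parts (λ contained in the p×(m−p) rectangle), s_λ(x|a) = det[ e_{λ'_i − i + j}(x | τ^{j−1}a) ]_{1 ≤ i,j ≤ m−p}, where e_k(x|a) is the factorial elementary function in p variables. -/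
open Finset
open scoped Classical

noncomputable section

variable {R : Type*} [CommRing R]

/-!
Let `G = ((x_j|a)^d)` (rows `d < p + q`, columns `j < p`) and let column `l < q` of `V` be
`(± e_{l+p-d}(x|τ^l a))_d`. By the generating function of the `e_k(x|a)`, column `l` of `V` lists
the coefficients of `± (y|a)^l ∏ᵢ (y - xᵢ)` in the basis `(y|a)^d`, so it is orthogonal to every
column of `G`. For such orthogonal `G`, `V` and any two ways `e`, `e₀` of splitting the rows into
`p` rows for `G` and `q` rows for `V`, the minors satisfy Jacobi's complementary relation
`det G_e · det V_{e₀} = sign (e e₀⁻¹) · det G_{e₀} · det V_e`. Take for `e` the boundary of `λ`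
(rows `λᵢ + p - 1 - i` for `G`, rows `p + t - λ'ₜ` for `V`) and for `e₀` that of the empty
partition: `det G_e` and `det G_{e₀}` are the two alternants, `V_{e₀}` is unitriangular, and `V_e`
is the dual Jacobi–Trudi matrix up to the factor `∏ₜ (-1)^{λ'ₜ}`, which is also the sign of
`e e₀⁻¹`.
-/

open Matrix

section FactorialElementary

variable {p : ℕ} (x : Fin p → R) (a : ℤ → R)

theorem fe_eq_zero_of_neg {k : ℤ} (hk : k < 0) : fe p x a k = 0 := by
  rw [fe, if_neg hk.not_ge]

theorem fe_natCast (k : ℕ) :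
    fe p x a k = ∑ f ∈ univ.filter (fun f : Fin k → Fin p => StrictMono f),
      ∏ r : Fin k, (x (f r) - a (((f r : ℕ) : ℤ) - ((r : ℕ) : ℤ) + 1)) := by
  rw [fe, if_pos (Int.natCast_nonneg k)]
  rfl

@[simp]
theorem fe_zero : fe p x a 0 = 1 := by
  rw [← Nat.cast_zero, fe_natCast, filter_true_of_mem fun f _ => Subsingleton.strictMono f]
  simp

theorem fe_eq_zero_of_lt {k : ℤ} (hk : (p : ℤ) < k) : fe p x a k = 0 := by
  lift k to ℕ using (Int.natCast_nonneg p).trans hk.le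
  rw [fe_natCast, filter_false_of_mem, sum_empty]
  intro f _ hf
  have := Fintype.card_le_of_injective f hf.injective
  simp only [Fintype.card_fin] at this
  omega

end FactorialElementary

theorem filter_strictMono_and_last_ne (n p : ℕ) :
    univ.filter (fun f : Fin (n + 1) → Fin (p + 1) => StrictMono f ∧ f (Fin.last n) ≠ Fin.last p)
      = (univ.filter fun g : Fin (n + 1) → Fin p => StrictMono g).map
          Fin.castSuccEmb.arrowCongrRight := by
  ext f
  simp only [mem_filter, mem_univ, true_and, mem_map]
  constructor
  · rintro ⟨hf, hlast⟩
    have hne : ∀ r, f r ≠ Fin.last p := fun r =>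
      Fin.ne_last_of_lt ((hf.monotone (Fin.le_last r)).trans_lt (Fin.lt_last_iff_ne_last.2 hlast))
    refine ⟨fun r => (f r).castPred (hne r), fun r s hrs => ?_, funext fun r => by simp⟩
    simpa [Fin.castPred_lt_castPred_iff] using hf hrs
  · rintro ⟨g, hg, rfl⟩
    exact ⟨fun r s hrs => by simpa using hg hrs, (Fin.castSucc_lt_last _).ne⟩

@[simps]
def snocLastEmbedding (n p : ℕ) : (Fin n → Fin p) ↪ (Fin (n + 1) → Fin (p + 1)) where
  toFun g := Fin.snoc (Fin.castSucc ∘ g) (Fin.last p)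
  inj' g g' h := funext fun r => by simpa using congrFun h r.castSucc

theorem filter_strictMono_and_last_eq (n p : ℕ) :
    univ.filter (fun f : Fin (n + 1) → Fin (p + 1) => StrictMono f ∧ f (Fin.last n) = Fin.last p)
      = (univ.filter fun g : Fin n → Fin p => StrictMono g).map (snocLastEmbedding n p) := by
  ext f
  simp only [mem_filter, mem_univ, true_and, mem_map]
  constructor
  · rintro ⟨hf, hlast⟩
    have hne : ∀ r : Fin n, f r.castSucc ≠ Fin.last p := fun r =>
      (hlast ▸ hf (Fin.castSucc_lt_last r)).ne
    refine ⟨fun r => (f r.castSucc).castPred (hne r), fun r s hrs => ?_, funext fun r => ?_⟩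
    · simpa [Fin.castPred_lt_castPred_iff] using hf (Fin.castSucc_lt_castSucc_iff.2 hrs)
    · induction r using Fin.lastCases with
      | last => simp [hlast]
      | cast r => simp
  · rintro ⟨g, hg, rfl⟩
    refine ⟨fun r s hrs => ?_, by simp⟩
    induction s using Fin.lastCases with
    | last =>
      obtain ⟨r, rfl⟩ := Fin.exists_castSucc_eq.2 hrs.ne
      simp
    | cast s =>
      obtain ⟨r, rfl⟩ := Fin.exists_castSucc_eq.2 (hrs.trans (Fin.castSucc_lt_last s)).ne
      simpa using hg (Fin.castSucc_lt_castSucc_iff.1 hrs)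

theorem fe_succ {p : ℕ} (x : Fin (p + 1) → R) (a : ℤ → R) (k : ℤ) :
    fe (p + 1) x a k =
      fe p (Fin.init x) a k + (x (Fin.last p) - a (p - k + 2)) * fe p (Fin.init x) a (k - 1) := by
  rcases lt_trichotomy k 0 with hk | rfl | hk
  · simp [fe_eq_zero_of_neg, hk, show k - 1 < 0 by omega]
  · simp [fe_eq_zero_of_neg]
  obtain ⟨n, rfl⟩ : ∃ n : ℕ, k = (n + 1 : ℕ) := ⟨(k - 1).toNat, by omega⟩
  rw [show ((n + 1 : ℕ) : ℤ) - 1 = n by push_cast; ring, fe_natCast, fe_natCast, fe_natCast,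
    ← sum_filter_add_sum_filter_not _ (fun f => f (Fin.last n) = Fin.last p), filter_filter,
    filter_filter, filter_strictMono_and_last_eq, filter_strictMono_and_last_ne, sum_map, sum_map,
    mul_sum, add_comm (∑ _ ∈ _, _)]
  congr 1
  refine sum_congr rfl fun g _ => ?_
  rw [Fin.prod_univ_castSucc, mul_comm]
  simp only [snocLastEmbedding_apply, Fin.snoc_castSucc, Fin.snoc_last, Function.comp_apply,
    Fin.val_castSucc, Fin.val_last, Fin.init]
  congr 3
  push_cast
  ring

theorem gfp_succ (y : R) (a : ℤ → R) (n : ℕ) :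
    gfp y a (n + 1) = gfp y a n * (y - a (n + 1)) :=
  prod_range_succ _ _

theorem gfp_add (y : R) (a : ℤ → R) (m n : ℕ) :
    gfp y a (m + n) = gfp y a m * gfp y (shiftSeq a m) n := by
  simp only [gfp, shiftSeq, prod_range_add]
  congr! 4
  push_cast
  ring

theorem sum_fe_mul_gfp {p : ℕ} (x : Fin p → R) (a : ℤ → R) (y : R) :
    ∑ k ∈ range (p + 1), (-1) ^ (k + p) * fe p x a (p - k) * gfp y a k = ∏ i, (y - x i) := by
  induction p with
  | zero => simp [gfp]
  | succ p ih =>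
    set x' := Fin.init x
    have hx' : ∏ i, (y - x' i) = ∏ i : Fin p, (y - x i.castSucc) := rfl
    have shifted : ∑ k ∈ range (p + 2), (-1) ^ (k + (p + 1)) * fe p x' a (p + 1 - k) * gfp y a k
        = ∑ k ∈ range (p + 1), (-1) ^ (k + p) * fe p x' a (p - k) * gfp y a (k + 1) := by
      rw [sum_range_succ', Nat.cast_zero, sub_zero, fe_eq_zero_of_lt _ _ (by omega)]
      simp only [mul_zero, zero_mul, add_zero, Nat.cast_add, Nat.cast_one]
      refine sum_congr rfl fun k _ => ?_
      rw [show (p : ℤ) + 1 - (k + 1) = p - k by ring]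
      ring
    have lowered : ∑ k ∈ range (p + 2), (-1) ^ (k + (p + 1)) *
          ((x (Fin.last p) - a (p - (p + 1 - k) + 2)) * fe p x' a (p + 1 - k - 1)) * gfp y a k
        = -∑ k ∈ range (p + 1), (-1) ^ (k + p) * fe p x' a (p - k) *
          ((x (Fin.last p) - a (k + 1)) * gfp y a k) := by
      rw [sum_range_succ, fe_eq_zero_of_neg _ _ (by omega), mul_zero, mul_zero, zero_mul,
        add_zero, ← sum_neg_distrib]
      refine sum_congr rfl fun k _ => ?_
      rw [show (p : ℤ) - (p + 1 - k) + 2 = k + 1 by ring, show (p : ℤ) + 1 - k - 1 = p - k by ring,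
        ← add_assoc, pow_succ]
      ring
    rw [Fin.prod_univ_castSucc, ← hx', ← ih, sum_mul]
    simp_rw [fe_succ, mul_add, add_mul, sum_add_distrib]
    rw [Nat.cast_succ, shifted, lowered, ← sub_eq_add_neg, ← sum_sub_distrib]
    refine sum_congr rfl fun k _ => ?_
    rw [gfp_succ]
    ring

section Matrices

variable {p : ℕ} (q : ℕ) (x : Fin p → R) (a : ℤ → R)

def gfpMatrix : Matrix (Fin (p + q)) (Fin p) R :=
  of fun d j => gfp (x j) a d

def feMatrix : Matrix (Fin (p + q)) (Fin q) R :=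
  of fun d l => (-1) ^ (d + l + p : ℕ) * fe p x (shiftSeq a l) (l + p - d)

theorem sum_feMatrix_mul_gfp (l : Fin q) (y : R) :
    ∑ d, feMatrix q x a d l * gfp y a d = gfp y a l * ∏ i, (y - x i) := by
  set F : ℕ → R := fun d => (-1) ^ (d + l + p) * fe p x (shiftSeq a l) (l + p - d) * gfp y a d
  have support : ∑ d ∈ range (p + q), F d = ∑ k ∈ range (p + 1), F (l + k) := by
    rw [← Nat.add_sub_cancel_left (n := l) (m := p + 1), ← sum_Ico_eq_sum_range]
    refine (sum_subset (fun d hd => ?_) fun d hd hd' => ?_).symm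
    · simp only [mem_Ico, mem_range] at hd ⊢
      omega
    · simp only [mem_Ico, not_and_or, not_le, not_lt] at hd'
      rcases hd' with h | h
      · simp [F, fe_eq_zero_of_lt, show (p : ℤ) < l + p - d by omega]
      · simp [F, fe_eq_zero_of_neg, show (l : ℤ) + p - d < 0 by omega]
  calc ∑ d, feMatrix q x a d l * gfp y a d
      = ∑ k ∈ range (p + 1), F (l + k) := by
        rw [← support, ← Fin.sum_univ_eq_sum_range]
        rfl
    _ = gfp y a l * ∑ k ∈ range (p + 1),
          (-1) ^ (k + p) * fe p x (shiftSeq a l) (p - k) * gfp y (shiftSeq a l) k := by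
        rw [mul_sum]
        refine sum_congr rfl fun k _ => ?_
        simp only [F, gfp_add, Nat.cast_add, show (l : ℤ) + p - (l + k) = p - k by ring]
        rw [show (l : ℕ) + k + l + p = (k + p) + 2 * l by ring, pow_add, pow_mul]
        ring
    _ = gfp y a l * ∏ i, (y - x i) := by rw [sum_fe_mul_gfp]

theorem transpose_gfpMatrix_mul_feMatrix : (gfpMatrix q x a)ᵀ * feMatrix q x a = 0 := by
  ext j l
  simp only [mul_apply, transpose_apply, Matrix.zero_apply, gfpMatrix, of_apply,
    mul_comm (gfp _ _ _), sum_feMatrix_mul_gfp]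
  rw [prod_eq_zero (mem_univ j) (sub_self _), zero_mul]

end Matrices

/-- Compute `det ([G | Q]ᵀ [P | V])`, where `P`, `Q` select the rows `e ∘ inl`, `e₀ ∘ inr`, once
blockwise and once after reindexing the rows by `e`. -/
theorem det_submatrix_mul_det_submatrix_of_transpose_mul_eq_zero {ι α β : Type*}
    [Fintype ι] [DecidableEq ι] [Fintype α] [DecidableEq α] [Fintype β] [DecidableEq β]
    (G : Matrix ι α R) (V : Matrix ι β R) (hGV : Gᵀ * V = 0) (e e₀ : α ⊕ β ≃ ι) :
    (G.submatrix (e ∘ Sum.inl) id).det * (V.submatrix (e₀ ∘ Sum.inr) id).det =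
      Equiv.Perm.sign (e.trans e₀.symm) * (G.submatrix (e₀ ∘ Sum.inl) id).det *
        (V.submatrix (e ∘ Sum.inr) id).det := by
  set P := (1 : Matrix ι ι R).submatrix id (e ∘ Sum.inl)
  set Q := (1 : Matrix ι ι R).submatrix id (e₀ ∘ Sum.inr)
  set X := fromCols G Q
  set F := fromCols P V
  have blocks : Xᵀ * F =
      fromBlocks (G.submatrix (e ∘ Sum.inl) id)ᵀ 0 (Qᵀ * P) (V.submatrix (e₀ ∘ Sum.inr) id) := by
    rw [transpose_fromCols, fromRows_mul_fromCols, hGV]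
    congr 1 <;> ext <;> simp [P, Q, mul_apply, one_apply]
  have reindexed : Xᵀ * F = (X.submatrix e id)ᵀ * F.submatrix e id := by
    rw [transpose_submatrix, submatrix_mul_equiv]
    rfl
  have hF : (F.submatrix e id).det = (V.submatrix (e ∘ Sum.inr) id).det := by
    calc (F.submatrix e id).det
        = (fromBlocks 1 (V.submatrix (e ∘ Sum.inl) id) 0 (V.submatrix (e ∘ Sum.inr) id)).det := by
          congr 1
          ext (i | t) (j | l) <;> simp [F, P, one_apply, e.injective.eq_iff]
      _ = _ := by rw [det_fromBlocks_zero₂₁, det_one, one_mul]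
  have hX : (X.submatrix e₀ id).det = (G.submatrix (e₀ ∘ Sum.inl) id).det := by
    calc (X.submatrix e₀ id).det
        = (fromBlocks (G.submatrix (e₀ ∘ Sum.inl) id) 0 (G.submatrix (e₀ ∘ Sum.inr) id) 1).det := by
          congr 1
          ext (i | t) (j | l) <;> simp [X, Q, one_apply, e₀.injective.eq_iff]
      _ = _ := by rw [det_fromBlocks_zero₁₂, det_one, mul_one]
  have hperm : X.submatrix e id = (X.submatrix e₀ id).submatrix (e.trans e₀.symm) id := by
    ext c j
    simp
  have := congrArg det (blocks.symm.trans reindexed)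
  rw [det_fromBlocks_zero₁₂, det_transpose, det_mul, det_transpose, hF, hperm, det_permute,
    hX] at this
  rw [this]

theorem Equiv.Perm.sign_trans_symm_eq_prod {α : Type*} [Fintype α] [DecidableEq α] {n : ℕ}
    (e f : α ≃ Fin n) :
    Perm.sign (e.trans f.symm) = ∏ c, ∏ c', if f c < f c' ∧ e c' < e c then -1 else 1 := by
  have hconj : Perm.sign (e.trans f.symm) = Perm.sign (f.symm.trans e) := by
    rw [← Perm.sign_symm_trans_trans (e.trans f.symm) f]
    congr 1
    ext d
    simp
  rw [hconj, Perm.sign_eq_prod_prod_Ioi, ← f.prod_comp]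
  refine prod_congr rfl fun c _ => ?_
  rw [← filter_lt_eq_Ioi, prod_filter, ← f.prod_comp]
  refine prod_congr rfl fun c' _ => ?_
  simp only [Equiv.trans_apply, Equiv.symm_apply_apply]
  by_cases hf : f c < f c'
  · have hne : e c ≠ e c' := e.injective.ne fun h => hf.ne (by rw [h])
    rcases hne.lt_or_gt with h | h <;> simp [hf, h, h.not_gt]
  · simp [hf]

section Partition

variable {p : ℕ} (lam : Fin p → ℕ)

def conjugatePart (t : ℕ) : ℕ :=
  (univ.filter fun r : Fin p => t < lam r).card

theorem conjugatePart_le (t : ℕ) : conjugatePart lam t ≤ p :=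
  (card_filter_le _ _).trans (card_fin p).le

theorem conjugatePart_antitone : Antitone (conjugatePart lam) := fun _ _ h =>
  card_le_card (monotone_filter_right _ fun _ _ hr => h.trans_lt hr)

@[simp]
theorem conjugatePart_zero (t : ℕ) : conjugatePart (0 : Fin p → ℕ) t = 0 := by
  simp [conjugatePart]

theorem lt_conjugatePart_iff {lam : Fin p → ℕ} (hlam : Antitone lam) (i : Fin p) (t : ℕ) :
    (i : ℕ) < conjugatePart lam t ↔ t < lam i := by
  constructor
  · intro hi
    by_contra! ht
    have hsub : univ.filter (fun r => t < lam r) ⊆ Iio i := fun r hr => by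
      simp only [mem_filter, mem_univ, true_and, mem_Iio] at hr ⊢
      by_contra! hri
      exact (hlam hri |>.trans ht).not_gt hr
    have := card_le_card hsub
    rw [Fin.card_Iio] at this
    exact (hi.trans_le this).false
  · intro ht
    have hsub : Iic i ⊆ univ.filter (fun r => t < lam r) := fun r hr => by
      simp only [mem_filter, mem_univ, true_and, mem_Iic] at hr ⊢
      exact ht.trans_le (hlam hr)
    have := card_le_card hsub
    rw [Fin.card_Iic] at this
    exact this

def shiftedPart (i : Fin p) : ℕ := lam i + (p - 1 - i)

def dualShiftedPart (t : ℕ) : ℕ := p + t - conjugatePart lam t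

theorem shiftedPart_strictAnti {lam : Fin p → ℕ} (hlam : Antitone lam) :
    StrictAnti (shiftedPart lam) := fun i i' h => by
  have := hlam h.le
  have := i'.isLt
  simp only [shiftedPart]
  omega

theorem dualShiftedPart_strictMono : StrictMono (dualShiftedPart lam) := fun t t' h => by
  have := conjugatePart_antitone lam h.le
  have := conjugatePart_le lam t
  simp only [dualShiftedPart]
  omega

theorem dualShiftedPart_lt_shiftedPart_iff {lam : Fin p → ℕ} (hlam : Antitone lam) (i : Fin p)
    (t : ℕ) : dualShiftedPart lam t < shiftedPart lam i ↔ t < lam i := by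
  have := lt_conjugatePart_iff hlam i t
  have := conjugatePart_le lam t
  have := i.isLt
  simp only [dualShiftedPart, shiftedPart]
  omega

theorem shiftedPart_lt_dualShiftedPart_iff {lam : Fin p → ℕ} (hlam : Antitone lam) (i : Fin p)
    (t : ℕ) : shiftedPart lam i < dualShiftedPart lam t ↔ lam i ≤ t := by
  have := lt_conjugatePart_iff hlam i t
  have := conjugatePart_le lam t
  have := i.isLt
  simp only [dualShiftedPart, shiftedPart]
  omega

theorem shiftedPart_ne_dualShiftedPart {lam : Fin p → ℕ} (hlam : Antitone lam) (i : Fin p)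
    (t : ℕ) : shiftedPart lam i ≠ dualShiftedPart lam t := by
  have := dualShiftedPart_lt_shiftedPart_iff hlam i t
  have := shiftedPart_lt_dualShiftedPart_iff hlam i t
  omega

variable {q : ℕ}

/-- The sets `{λᵢ + p - 1 - i}` and `{p + t - λ'ₜ}` are the positions of the vertical and the
horizontal steps along the boundary of `λ` inside the `p × q` box, so together they fill
`{0, …, p + q - 1}`. -/
def boundaryEquiv (hlam : Antitone lam) (hrect : ∀ i, lam i ≤ q) : Fin p ⊕ Fin q ≃ Fin (p + q) :=
  Equiv.ofBijective
    (Sum.elim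
      (fun i => ⟨shiftedPart lam i, by have := hrect i; have := i.isLt; unfold shiftedPart; omega⟩)
      fun t => ⟨dualShiftedPart lam t, by have := t.isLt; unfold dualShiftedPart; omega⟩)
    ((Fintype.bijective_iff_injective_and_card _).2
      ⟨Function.Injective.sumElim
          (fun _ _ h => (shiftedPart_strictAnti hlam).injective (Fin.val_eq_of_eq h))
          (fun _ _ h => Fin.ext (dualShiftedPart_strictMono lam |>.injective (Fin.val_eq_of_eq h)))
          fun i t h => shiftedPart_ne_dualShiftedPart hlam i t (Fin.val_eq_of_eq h),
        by simp⟩)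

variable {lam}

@[simp]
theorem val_boundaryEquiv_inl (hlam : Antitone lam) (hrect : ∀ i, lam i ≤ q) (i : Fin p) :
    (boundaryEquiv lam hlam hrect (.inl i) : ℕ) = shiftedPart lam i := rfl

@[simp]
theorem val_boundaryEquiv_inr (hlam : Antitone lam) (hrect : ∀ i, lam i ≤ q) (t : Fin q) :
    (boundaryEquiv lam hlam hrect (.inr t) : ℕ) = dualShiftedPart lam t := rfl

/-- The inversions of the permutation are the boxes `(i, t)`, `t < λᵢ`, of `λ`. -/
theorem sign_boundaryEquiv_trans_symm (hlam : Antitone lam) (hrect : ∀ i, lam i ≤ q) :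
    Equiv.Perm.sign ((boundaryEquiv lam hlam hrect).trans
        (boundaryEquiv 0 antitone_const fun _ => Nat.zero_le q).symm) =
      ∏ t : Fin q, (-1) ^ conjugatePart lam t := by
  rw [Equiv.Perm.sign_trans_symm_eq_prod]
  have not_lt_and_gt {α : Type} [Preorder α] (a b : α) : (a < b ∧ b < a) ↔ False :=
    iff_false_intro fun h => lt_asymm h.1 h.2
  simp only [Fintype.prod_sum_type, Fin.lt_def, val_boundaryEquiv_inl, val_boundaryEquiv_inr,
    (shiftedPart_strictAnti hlam).lt_iff_gt,
    (shiftedPart_strictAnti (lam := 0) antitone_const).lt_iff_gt,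
    (dualShiftedPart_strictMono _).lt_iff_lt,
    shiftedPart_lt_dualShiftedPart_iff (lam := 0) antitone_const,
    dualShiftedPart_lt_shiftedPart_iff hlam,
    dualShiftedPart_lt_shiftedPart_iff (lam := 0) antitone_const,
    Pi.zero_apply, zero_le, not_lt_zero, not_lt_and_gt, true_and, false_and, if_false,
    prod_const_one, one_mul, mul_one]
  rw [prod_comm]
  refine prod_congr rfl fun t _ => ?_
  rw [conjugatePart, ← prod_const, prod_filter]

end Partition

section Minors

variable {p q : ℕ} (x : Fin p → R) (a : ℤ → R) {lam : Fin p → ℕ}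

theorem gfpMatrix_submatrix_boundaryEquiv_inl (hlam : Antitone lam) (hrect : ∀ i, lam i ≤ q) :
    (gfpMatrix q x a).submatrix (boundaryEquiv lam hlam hrect ∘ Sum.inl) id =
      of fun i j => gfp (x j) a (shiftedPart lam i) :=
  rfl

theorem det_feMatrix_submatrix_boundaryEquiv_inr (hlam : Antitone lam) (hrect : ∀ i, lam i ≤ q) :
    ((feMatrix q x a).submatrix (boundaryEquiv lam hlam hrect ∘ Sum.inr) id).det =
      (∏ t : Fin q, (-1) ^ conjugatePart lam t) *
        (of fun t l : Fin q => fe p x (shiftSeq a l) (conjugatePart lam t - t + l)).det := by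
  set E := of fun t l : Fin q => fe p x (shiftSeq a l) (conjugatePart lam t - t + l)
  have entry (t l : Fin q) :
      (feMatrix q x a).submatrix (boundaryEquiv lam hlam hrect ∘ Sum.inr) id t l =
        (-1) ^ (conjugatePart lam t + t) * ((-1) ^ (l : ℕ) * E t l) := by
    have hc := conjugatePart_le lam t
    simp only [submatrix_apply, Function.comp_apply, id, feMatrix, of_apply, E,
      val_boundaryEquiv_inr, dualShiftedPart,
      Nat.cast_sub (show conjugatePart lam t ≤ p + t by omega)]
    rw [← mul_assoc, ← pow_add, neg_one_pow_eq_pow_mod_two,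
      neg_one_pow_eq_pow_mod_two (n := conjugatePart lam t + t + l)]
    congr 1
    · congr 1
      omega
    · congr 1
      push_cast
      ring
  calc ((feMatrix q x a).submatrix (boundaryEquiv lam hlam hrect ∘ Sum.inr) id).det
      = (of fun t l : Fin q => (-1) ^ (conjugatePart lam t + t) *
          (of fun t l : Fin q => (-1) ^ (l : ℕ) * E t l) t l).det := by
        congr 1
        ext t l
        exact entry t l
    _ = (∏ t : Fin q, (-1) ^ (conjugatePart lam t + t)) *
          ((∏ l : Fin q, (-1) ^ (l : ℕ)) * E.det) := by
        rw [det_mul_column, det_mul_row]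
    _ = (∏ t : Fin q, (-1) ^ conjugatePart lam t) * E.det := by
        rw [← mul_assoc, ← prod_mul_distrib]
        congr 2
        ext t
        rw [← pow_add, add_assoc, ← two_mul, pow_add, pow_mul, neg_one_sq, one_pow, mul_one]

theorem det_fe_shiftSeq_neg_add_eq_one :
    (of fun t l : Fin q => fe p x (shiftSeq a l) (-t + l)).det = 1 := by
  rw [det_of_isUpperTriangular]
  · simp
  · intro t l hlt
    simp [fe_eq_zero_of_neg, show -(t : ℤ) + l < 0 by have : (l : ℕ) < t := hlt; omega]

end Minors

theorem factorial_jacobiTrudi_e_general (p m : ℕ) (x : Fin p → R) (a : ℤ → R)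
    (lam : Fin p → ℕ) (hlam : Antitone lam) (hrect : ∀ i, lam i ≤ m - p) :
    Matrix.det (Matrix.of fun i j : Fin p => gfp (x j) a (p - 1 - (i : ℕ))) *
        Matrix.det (Matrix.of fun i j : Fin (m - p) =>
          fe p x (shiftSeq a ((j : ℕ) : ℤ))
            (((Finset.univ.filter (fun r : Fin p => (i : ℕ) + 1 ≤ lam r)).card : ℤ)
              - ((i : ℕ) : ℤ) + ((j : ℕ) : ℤ))) =
      Matrix.det (Matrix.of fun i j : Fin p => gfp (x j) a (lam i + (p - 1 - (i : ℕ)))) := by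
  set ε : R := ∏ t : Fin (m - p), (-1) ^ conjugatePart lam t
  set E := of fun t l : Fin (m - p) => fe p x (shiftSeq a l) (conjugatePart lam t - t + l)
  have hε : ε * ε = 1 := by
    rw [← prod_mul_distrib]
    exact prod_eq_one fun t _ => by rw [← mul_pow, neg_one_mul, neg_neg, one_pow]
  have key := det_submatrix_mul_det_submatrix_of_transpose_mul_eq_zero _ _
    (transpose_gfpMatrix_mul_feMatrix (m - p) x a) (boundaryEquiv lam hlam hrect)
    (boundaryEquiv 0 antitone_const fun _ => Nat.zero_le _)
  simp only [gfpMatrix_submatrix_boundaryEquiv_inl, sign_boundaryEquiv_trans_symm,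
    det_feMatrix_submatrix_boundaryEquiv_inr, conjugatePart_zero, shiftedPart, Pi.zero_apply,
    zero_add, pow_zero, prod_const_one, Nat.cast_zero, zero_sub, det_fe_shiftSeq_neg_add_eq_one,
    mul_one] at key
  push_cast at key
  change _ * E.det = _
  rw [key]
  linear_combination (-((of fun i j : Fin p => gfp (x j) a (p - 1 - i)).det * E.det)) * hε

/-- (Factorial Jacobi-Trudi, dual version.)  For `λ` contained in the
    `p × (m-p)` rectangle, the factorial Schur function `s_λ(x|a)` (given as the ratio
    `det[(x_j|a)^{λ_i+p-i}] / det[(x_j|a)^{p-i}]`, stated here with the denominator cleared)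
    equals `det[ e_{λ'_i - i + j}(x|τ^{j-1}a) ]_{1≤i,j≤m-p}`, where `λ'` is the conjugate. -/
theorem factorial_jacobiTrudi_e (p m : ℕ) (hpm : p ≤ m) (x : Fin p → R) (a : ℤ → R)
    (lam : Fin p → ℕ) (hlam : Antitone lam) (hrect : ∀ i, lam i ≤ m - p) :
    Matrix.det (Matrix.of fun i j : Fin p => gfp (x j) a (p - 1 - (i : ℕ))) *
        Matrix.det (Matrix.of fun i j : Fin (m - p) =>
          fe p x (shiftSeq a ((j : ℕ) : ℤ))
            (((Finset.univ.filter (fun r : Fin p => (i : ℕ) + 1 ≤ lam r)).card : ℤ)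
              - ((i : ℕ) : ℤ) + ((j : ℕ) : ℤ))) =
      Matrix.det (Matrix.of fun i j : Fin p => gfp (x j) a (lam i + (p - 1 - (i : ℕ)))) :=
  factorial_jacobiTrudi_e_general p m x a lam hlam hrect
end
end
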